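/- arXiv:2603.28468 — 4 statements merged into one kernel-verified Lean document; each statement's English description precedes it below -/
import Mathlib

section
/- Let d ∈ {1,2,3,7,11} and let p₁/q₁ and p₂/q₂ be points of ℚ(√(-d)) ∪ {∞} written with p_k, q_k ∈ ℤ[ω_d] coprime (k = 1,2). Then there exists a matrix A ∈ SL(2, ℤ[ω_d]) whose Möbius transformation satisfies A(∞) = p₁/q₁ and A(0) = p₂/q₂ (equivalently A·[1:0] = [p₁:q₁] and A·[0:1] = [p₂:q₂] in the projective line over ℚ(√(-d))) if and only if |p₁q₂ − p₂q₁| = 1. -/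
/-- `ω_d`: the generator of the ring of integers of `ℚ(√(-d))`. -/
noncomputable def omegaD (d : ℕ) : ℂ :=
  if d % 4 = 3 then (1 + Complex.I * Real.sqrt d) / 2 else Complex.I * Real.sqrt d

/-- The ring of integers `ℤ[ω_d]` of `ℚ(√(-d))`, as a subset of `ℂ`. -/
def ringInt (d : ℕ) : Set ℂ := {z | ∃ a b : ℤ, z = (a : ℂ) + (b : ℂ) * omegaD d}

/-- `p` and `q` are coprime in `ℤ[ω_d]`. -/
def CoprimeIn (d : ℕ) (p q : ℂ) : Prop :=
  ∃ u v : ℂ, u ∈ ringInt d ∧ v ∈ ringInt d ∧ u * p + v * q = 1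

/-- `x` is an element of the field `ℚ(√(-d)) ⊆ ℂ`. -/
def inK (d : ℕ) (x : ℂ) : Prop :=
  ∃ p q : ℂ, p ∈ ringInt d ∧ q ∈ ringInt d ∧ q ≠ 0 ∧ x = p / q

/-- The point `p/q` of `ℂ ∪ {∞}`, with `p/0 = ∞`. -/
noncomputable def divC (p q : ℂ) : OnePoint ℂ :=
  if q = 0 then OnePoint.infty else ((p / q : ℂ) : OnePoint ℂ)

/-- Two points of `ℚ(√(-d)) ∪ {∞}` are Farey neighbours (joined by an edge of
the Farey graph `E_d`) if they have coprime representations `p₁/q₁`, `p₂/q₂`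
with `|p₁q₂ − p₂q₁| = 1`. -/
def FareyAdj (d : ℕ) (x y : OnePoint ℂ) : Prop :=
  ∃ p₁ q₁ p₂ q₂ : ℂ, p₁ ∈ ringInt d ∧ q₁ ∈ ringInt d ∧ p₂ ∈ ringInt d ∧ q₂ ∈ ringInt d ∧
    CoprimeIn d p₁ q₁ ∧ CoprimeIn d p₂ q₂ ∧ x = divC p₁ q₁ ∧ y = divC p₂ q₂ ∧
    ‖p₁ * q₂ - p₂ * q₁‖ = 1

/-- `f 0 → f 1 → ⋯ → f n` is a walk (of length `n`) in the Farey graph `E_d`. -/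
def IsWalk (d n : ℕ) (f : ℕ → OnePoint ℂ) : Prop := ∀ k, k < n → FareyAdj d (f k) (f (k + 1))

/-- `f 0 → ⋯ → f n` is a geodesic path in `E_d`: a walk of minimal length
among all walks with the same endpoints. -/
def IsGeodesicWalk (d n : ℕ) (f : ℕ → OnePoint ℂ) : Prop :=
  IsWalk d n f ∧ ∀ (m : ℕ) (g : ℕ → OnePoint ℂ), IsWalk d m g → g 0 = f 0 → g m = f n → n ≤ m

/-- Numerators of the convergents of `[a₁, a₂, …]` (`a 0` is unused):
`p₀ = 0`, `p₁ = 1`, `p_k = a_k p_{k−1} + p_{k−2}`. -/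
noncomputable def cfP (a : ℕ → ℂ) : ℕ → ℂ
  | 0 => 0
  | 1 => 1
  | (k + 2) => a (k + 2) * cfP a (k + 1) + cfP a k

/-- Denominators of the convergents of `[a₁, a₂, …]`:
`q₀ = 1`, `q₁ = a₁`, `q_k = a_k q_{k−1} + q_{k−2}`. -/
noncomputable def cfQ (a : ℕ → ℂ) : ℕ → ℂ
  | 0 => 1
  | 1 => a 1
  | (k + 2) => a (k + 2) * cfQ a (k + 1) + cfQ a k

/-- The walk `∞ → p₀/q₀ = 0 → p₁/q₁ → ⋯` along the convergents of `[a₁, a₂, …]`. -/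
noncomputable def cfWalk (a : ℕ → ℂ) : ℕ → OnePoint ℂ :=
  fun k => if k = 0 then OnePoint.infty else divC (cfP a (k - 1)) (cfQ a (k - 1))

/- If `A` realises the two points, its columns are `c₁ (p₁, q₁)` and `c₂ (p₂, q₂)`, and coprimality
forces `c₁, c₂ ∈ ℤ[ω_d]`; then `det A = c₁ c₂ (p₁q₂ − p₂q₁) = 1` makes `p₁q₂ − p₂q₁` a unit, and
units of `ℤ[ω_d]` have norm `1` because norms are nonnegative integers. Conversely, if
`Δ = p₁q₂ − p₂q₁` has norm `1`, then `Δ⁻¹ = conj Δ ∈ ℤ[ω_d]` and the matrix with columns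
`(p₁, q₁)` and `conj Δ · (p₂, q₂)` works. -/

lemma exists_omegaD_sq_and_conj (d : ℕ) :
    ∃ t n : ℤ, omegaD d ^ 2 = t * omegaD d - n ∧ starRingEnd ℂ (omegaD d) = t - omegaD d := by
  have hsqrt : ((Real.sqrt d : ℝ) : ℂ) * ((Real.sqrt d : ℝ) : ℂ) = d := by
    rw [← Complex.ofReal_mul, Real.mul_self_sqrt (Nat.cast_nonneg d), Complex.ofReal_natCast]
  unfold omegaD
  split_ifs with h
  · obtain ⟨m, hm⟩ : ∃ m : ℕ, d + 1 = 4 * m := ⟨(d + 1) / 4, by omega⟩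
    have hm' : (d : ℂ) + 1 = 4 * m := by exact_mod_cast hm
    refine ⟨1, m, ?_, ?_⟩
    · push_cast
      linear_combination (((Real.sqrt d : ℝ) : ℂ) ^ 2 / 4) * Complex.I_mul_I - hsqrt / 4 - hm' / 4
    · simp only [map_div₀, map_add, map_one, map_mul, Complex.conj_I, Complex.conj_ofReal,
        map_ofNat]
      push_cast
      ring
  · refine ⟨0, d, ?_, ?_⟩
    · push_cast
      linear_combination ((Real.sqrt d : ℝ) : ℂ) ^ 2 * Complex.I_mul_I - hsqrt
    · simp [Complex.conj_ofReal]

def ringIntSubring (d : ℕ) : Subring ℂ where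
  carrier := ringInt d
  mul_mem' := by
    rintro _ _ ⟨a, b, rfl⟩ ⟨a', b', rfl⟩
    obtain ⟨t, n, hsq, -⟩ := exists_omegaD_sq_and_conj d
    exact ⟨a * a' - b * b' * n, a * b' + a' * b + b * b' * t, by
      push_cast; linear_combination ((b : ℂ) * b') * hsq⟩
  one_mem' := ⟨1, 0, by simp⟩
  add_mem' := by
    rintro _ _ ⟨a, b, rfl⟩ ⟨a', b', rfl⟩
    exact ⟨a + a', b + b', by push_cast; ring⟩
  zero_mem' := ⟨0, 0, by simp⟩
  neg_mem' := by
    rintro _ ⟨a, b, rfl⟩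
    exact ⟨-a, -b, by push_cast; ring⟩

lemma conj_mem_ringInt {d : ℕ} {z : ℂ} (hz : z ∈ ringInt d) : starRingEnd ℂ z ∈ ringInt d := by
  obtain ⟨a, b, rfl⟩ := hz
  obtain ⟨t, -, -, hconj⟩ := exists_omegaD_sq_and_conj d
  exact ⟨a + b * t, -b, by simp only [map_add, map_mul, map_intCast, hconj]; push_cast; ring⟩

lemma exists_normSq_eq_intCast {d : ℕ} {z : ℂ} (hz : z ∈ ringInt d) :
    ∃ n : ℤ, Complex.normSq z = n := by
  obtain ⟨a, b, rfl⟩ := hz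
  obtain ⟨t, n, hsq, hconj⟩ := exists_omegaD_sq_and_conj d
  refine ⟨a ^ 2 + a * b * t + b ^ 2 * n, Complex.ofReal_injective ?_⟩
  rw [← Complex.mul_conj]
  simp only [map_add, map_mul, map_intCast, hconj]
  push_cast
  linear_combination (-(b : ℂ) ^ 2) * hsq

lemma norm_eq_one_of_mul_eq_one {d : ℕ} {z w : ℂ} (hz : z ∈ ringInt d) (hw : w ∈ ringInt d)
    (hzw : z * w = 1) : ‖z‖ = 1 := by
  obtain ⟨m, hm⟩ := exists_normSq_eq_intCast hz
  obtain ⟨n, hn⟩ := exists_normSq_eq_intCast hw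
  have hmn : m * n = 1 := by
    have := congrArg Complex.normSq hzw
    rw [map_mul, map_one, hm, hn] at this
    exact_mod_cast this
  have hm0 : 0 ≤ m := by exact_mod_cast hm ▸ Complex.normSq_nonneg z
  have hm1 : m = 1 := by
    rcases Int.mul_eq_one_iff_eq_one_or_neg_one.1 hmn with ⟨h, -⟩ | ⟨h, -⟩ <;> omega
  rw [← pow_eq_one_iff_of_nonneg (norm_nonneg z) two_ne_zero, Complex.sq_norm, hm, hm1,
    Int.cast_one]

lemma CoprimeIn.mem_of_mul_mem {d : ℕ} {p q c : ℂ} (h : CoprimeIn d p q)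
    (hp : c * p ∈ ringInt d) (hq : c * q ∈ ringInt d) : c ∈ ringInt d := by
  obtain ⟨u, v, hu, hv, huv⟩ := h
  have hc : c = u * (c * p) + v * (c * q) := by linear_combination (-c) * huv
  rw [hc]
  change _ ∈ ringIntSubring d
  exact add_mem (mul_mem hu hp) (mul_mem hv hq)

theorem farey_edge_iff_det_one_general (d : ℕ)
    (p₁ q₁ p₂ q₂ : ℂ)
    (hp₁ : p₁ ∈ ringInt d) (hq₁ : q₁ ∈ ringInt d)
    (hp₂ : p₂ ∈ ringInt d) (hq₂ : q₂ ∈ ringInt d)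
    (hc₁ : CoprimeIn d p₁ q₁) (hc₂ : CoprimeIn d p₂ q₂) :
    (∃ A : Matrix (Fin 2) (Fin 2) ℂ,
        (∀ i j, A i j ∈ ringInt d) ∧ A.det = 1 ∧
        (∃ c : ℂ, c ≠ 0 ∧ A 0 0 = c * p₁ ∧ A 1 0 = c * q₁) ∧
        (∃ c : ℂ, c ≠ 0 ∧ A 0 1 = c * p₂ ∧ A 1 1 = c * q₂)) ↔
      ‖p₁ * q₂ - p₂ * q₁‖ = 1 := by
  have hΔ : p₁ * q₂ - p₂ * q₁ ∈ ringInt d := by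
    change _ ∈ ringIntSubring d
    exact sub_mem (mul_mem hp₁ hq₂) (mul_mem hp₂ hq₁)
  constructor
  · rintro ⟨A, hA, hdet, ⟨c₁, -, h00, h10⟩, ⟨c₂, -, h01, h11⟩⟩
    have hc₁A : c₁ ∈ ringInt d := hc₁.mem_of_mul_mem (h00 ▸ hA 0 0) (h10 ▸ hA 1 0)
    have hc₂A : c₂ ∈ ringInt d := hc₂.mem_of_mul_mem (h01 ▸ hA 0 1) (h11 ▸ hA 1 1)
    refine norm_eq_one_of_mul_eq_one hΔ ((ringIntSubring d).mul_mem hc₁A hc₂A) ?_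
    rw [Matrix.det_fin_two, h00, h10, h01, h11] at hdet
    linear_combination hdet
  · intro h
    set e := starRingEnd ℂ (p₁ * q₂ - p₂ * q₁)
    have he : (p₁ * q₂ - p₂ * q₁) * e = 1 := by
      rw [Complex.mul_conj, Complex.normSq_eq_norm_sq, h]; norm_num
    have he₀ : e ≠ 0 := right_ne_zero_of_mul_eq_one he
    have heR : e ∈ ringIntSubring d := conj_mem_ringInt hΔ
    refine ⟨!![p₁, e * p₂; q₁, e * q₂], ?_, ?_, ⟨1, one_ne_zero, by simp, by simp⟩,
      ⟨e, he₀, by simp, by simp⟩⟩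
    · intro i j
      fin_cases i <;> fin_cases j
      exacts [hp₁, mul_mem heR hp₂, hq₁, mul_mem heR hq₂]
    · rw [Matrix.det_fin_two_of]
      linear_combination he

/-- For `d ∈ {1,2,3,7,11}` and points `p₁/q₁`, `p₂/q₂` of
`ℚ(√(-d)) ∪ {∞}` in coprime lowest terms, there is a matrix
`A ∈ SL(2, ℤ[ω_d])` with `A·[1:0] = [p₁:q₁]` and `A·[0:1] = [p₂:q₂]`
(projectively) if and only if `|p₁q₂ − p₂q₁| = 1`. -/
theorem farey_edge_iff_det_one (d : ℕ) (hd : d ∈ ({1, 2, 3, 7, 11} : Set ℕ))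
    (p₁ q₁ p₂ q₂ : ℂ)
    (hp₁ : p₁ ∈ ringInt d) (hq₁ : q₁ ∈ ringInt d)
    (hp₂ : p₂ ∈ ringInt d) (hq₂ : q₂ ∈ ringInt d)
    (hc₁ : CoprimeIn d p₁ q₁) (hc₂ : CoprimeIn d p₂ q₂) :
    (∃ A : Matrix (Fin 2) (Fin 2) ℂ,
        (∀ i j, A i j ∈ ringInt d) ∧ A.det = 1 ∧
        (∃ c : ℂ, c ≠ 0 ∧ A 0 0 = c * p₁ ∧ A 1 0 = c * q₁) ∧
        (∃ c : ℂ, c ≠ 0 ∧ A 0 1 = c * p₂ ∧ A 1 1 = c * q₂)) ↔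
      ‖p₁ * q₂ - p₂ * q₁‖ = 1 :=
  farey_edge_iff_det_one_general d p₁ q₁ p₂ q₂ hp₁ hq₁ hp₂ hq₂ hc₁ hc₂
end

section
/- For every d ∈ {1,2,3,7,11} the Farey graph E_d is connected; in particular, for every R ∈ ℚ(√(-d)) there exists a finite walk in E_d from ∞ to R. -/
/-- A vertex of the Farey graph `E_d`: a point of `ℚ(√(-d)) ∪ {∞}`. -/
def isVertex (d : ℕ) (x : OnePoint ℂ) : Prop :=
  x = OnePoint.infty ∨ ∃ z : ℂ, x = ((z : ℂ) : OnePoint ℂ) ∧ inK d z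


open Complex
open scoped OnePoint

section

variable {d : ℕ}

lemma sq_eq_two_re_mul_sub_normSq (z : ℂ) : z ^ 2 = ((2 * z.re : ℝ) : ℂ) * z - (normSq z : ℂ) := by
  rw [← add_conj, ← mul_conj]
  ring

lemma omegaD_re_im_of_mod_four_eq_three (h : d % 4 = 3) :
    (omegaD d).re = 1 / 2 ∧ (omegaD d).im = Real.sqrt d / 2 := by
  simp [omegaD, h]

lemma omegaD_re_im_of_mod_four_ne_three (h : d % 4 ≠ 3) :
    (omegaD d).re = 0 ∧ (omegaD d).im = Real.sqrt d := by
  simp [omegaD, h]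

variable (d) in
lemma omegaD_trace_norm_int :
    ∃ t n : ℤ, 2 * (omegaD d).re = t ∧ normSq (omegaD d) = n := by
  have hd : Real.sqrt d * Real.sqrt d = d := Real.mul_self_sqrt d.cast_nonneg
  by_cases h : d % 4 = 3
  · obtain ⟨hre, him⟩ := omegaD_re_im_of_mod_four_eq_three h
    obtain ⟨e, he⟩ : 4 ∣ d + 1 := by omega
    have he' : (d : ℝ) + 1 = 4 * e := by exact_mod_cast he
    refine ⟨1, e, by rw [hre]; norm_num, ?_⟩
    rw [normSq_apply, hre, him]
    linear_combination (hd + he') / 4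
  · obtain ⟨hre, him⟩ := omegaD_re_im_of_mod_four_ne_three h
    exact ⟨0, d, by simp [hre], by simp [normSq_apply, hre, him, hd]⟩

variable (d) in
lemma omegaD_im_sq : (omegaD d).im ^ 2 = if d % 4 = 3 then (d : ℝ) / 4 else d := by
  have hd : Real.sqrt d ^ 2 = d := Real.sq_sqrt d.cast_nonneg
  split_ifs with h
  · rw [(omegaD_re_im_of_mod_four_eq_three h).2, div_pow, hd]
    norm_num
  · rw [(omegaD_re_im_of_mod_four_ne_three h).2, hd]

variable (d) in
lemma ringInt_zero : (0 : ℂ) ∈ ringInt d := ⟨0, 0, by simp⟩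

variable (d) in
lemma ringInt_one : (1 : ℂ) ∈ ringInt d := ⟨1, 0, by simp⟩

lemma ringInt_neg {z : ℂ} (hz : z ∈ ringInt d) : -z ∈ ringInt d := by
  obtain ⟨a, b, rfl⟩ := hz
  exact ⟨-a, -b, by push_cast; ring⟩

lemma ringInt_add {z w : ℂ} (hz : z ∈ ringInt d) (hw : w ∈ ringInt d) :
    z + w ∈ ringInt d := by
  obtain ⟨a, b, rfl⟩ := hz
  obtain ⟨c, e, rfl⟩ := hw
  exact ⟨a + c, b + e, by push_cast; ring⟩

lemma ringInt_sub {z w : ℂ} (hz : z ∈ ringInt d) (hw : w ∈ ringInt d) :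
    z - w ∈ ringInt d := by
  simpa [sub_eq_add_neg] using ringInt_add hz (ringInt_neg hw)

lemma ringInt_mul {z w : ℂ} (hz : z ∈ ringInt d) (hw : w ∈ ringInt d) :
    z * w ∈ ringInt d := by
  obtain ⟨t, n, ht, hn⟩ := omegaD_trace_norm_int d
  have hsq := sq_eq_two_re_mul_sub_normSq (omegaD d)
  rw [ht, hn] at hsq
  obtain ⟨a, b, rfl⟩ := hz
  obtain ⟨c, e, rfl⟩ := hw
  exact ⟨a * c - b * e * n, a * e + b * c + b * e * t, by push_cast; linear_combination b * e * hsq⟩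

lemma ringInt_mul_add_mul {a b z w : ℂ} (ha : a ∈ ringInt d) (hz : z ∈ ringInt d)
    (hb : b ∈ ringInt d) (hw : w ∈ ringInt d) : a * z + b * w ∈ ringInt d :=
  ringInt_add (ringInt_mul ha hz) (ringInt_mul hb hw)

lemma exists_normSq_eq_natCast {z : ℂ} (hz : z ∈ ringInt d) :
    ∃ m : ℕ, normSq z = m := by
  obtain ⟨t, n, ht, hn⟩ := omegaD_trace_norm_int d
  obtain ⟨a, b, rfl⟩ := hz
  have key : normSq (a + b * omegaD d) = ((a ^ 2 + a * b * t + b ^ 2 * n : ℤ) : ℝ) := by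
    rw [normSq_apply] at hn ⊢
    push_cast
    simp only [add_re, add_im, mul_re, mul_im, intCast_re, intCast_im]
    linear_combination (a : ℝ) * b * ht + (b : ℝ) ^ 2 * hn
  have hnonneg : 0 ≤ a ^ 2 + a * b * t + b ^ 2 * n := by
    exact_mod_cast key ▸ normSq_nonneg _
  exact ⟨(a ^ 2 + a * b * t + b ^ 2 * n).toNat, by
    rw [key]; exact_mod_cast (Int.toNat_of_nonneg hnonneg).symm⟩

lemma norm_eq_one_of_inv_mem_ringInt {z : ℂ} (hz : z ∈ ringInt d) (hz' : z⁻¹ ∈ ringInt d)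
    (hz0 : z ≠ 0) : ‖z‖ = 1 := by
  obtain ⟨m, hm⟩ := exists_normSq_eq_natCast hz
  obtain ⟨m', hm'⟩ := exists_normSq_eq_natCast hz'
  have hmm' : m * m' = 1 := by
    have := congrArg normSq (mul_inv_cancel₀ hz0)
    rw [map_mul, hm, hm', map_one] at this
    exact_mod_cast this
  rw [← pow_eq_one_iff_of_nonneg (norm_nonneg z) two_ne_zero, Complex.sq_norm, hm,
    Nat.eq_one_of_mul_eq_one_right hmm', Nat.cast_one]

lemma exists_int_normSq_sub_lt_one {ω : ℂ} (h0 : ω.im ≠ 0) (h3 : ω.im ^ 2 < 3) (ξ : ℂ) :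
    ∃ s b : ℤ, normSq (ξ - (s + b * ω)) < 1 := by
  set b := round (ξ.im / ω.im)
  set x := ξ.re - b * ω.re
  refine ⟨round x, b, ?_⟩
  have hre : (ξ - (round x + b * ω)).re = x - round x := by
    simp only [sub_re, add_re, intCast_re, mul_re, intCast_im, zero_mul, sub_zero, x]
    ring
  have him : (ξ - (round x + b * ω)).im = (ξ.im / ω.im - b) * ω.im := by
    simp only [sub_im, add_im, intCast_im, mul_im, intCast_re, zero_mul, add_zero, zero_add]
    field_simp
  have h1 : (x - round x) ^ 2 ≤ 1 / 4 := by nlinarith [abs_le.1 (abs_sub_round x)]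
  have h2 : (ξ.im / ω.im - b) ^ 2 ≤ 1 / 4 := by nlinarith [abs_le.1 (abs_sub_round (ξ.im / ω.im))]
  rw [normSq_apply, hre, him]
  nlinarith [mul_le_mul_of_nonneg_right h2 (sq_nonneg ω.im)]

lemma divC_zero (p : ℂ) : divC p 0 = ∞ := if_pos rfl

lemma mul_eq_mul_of_divC_eq {p₁ q₁ p₂ q₂ : ℂ} (h : divC p₁ q₁ = divC p₂ q₂) :
    p₁ * q₂ = p₂ * q₁ := by
  unfold divC at h
  split_ifs at h with h₁ h₂ h₂
  · simp [h₁, h₂]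
  · exact absurd h.symm (OnePoint.coe_ne_infty _)
  · exact absurd h (OnePoint.coe_ne_infty _)
  · rwa [OnePoint.coe_eq_coe, div_eq_div_iff h₁ h₂] at h

lemma smul_divC (g : GL (Fin 2) ℂ) {p q : ℂ} (hpq : p ≠ 0 ∨ q ≠ 0) :
    g • divC p q = divC (g 0 0 * p + g 0 1 * q) (g 1 0 * p + g 1 1 * q) := by
  rcases eq_or_ne q 0 with rfl | hq
  · have hp : p ≠ 0 := by simpa using hpq
    simp [divC, OnePoint.smul_infty_eq_ite, hp, mul_div_mul_right]
  · have hlin : ∀ a b : ℂ, a * (p / q) + b = (a * p + b * q) / q := fun a b => by field_simp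
    rw [divC, if_neg hq, OnePoint.smul_some_eq_ite, divC]
    simp only [hlin, div_eq_zero_iff, hq, or_false, div_div_div_cancel_right₀ hq]

lemma CoprimeIn.ne_zero {p q : ℂ} (h : CoprimeIn d p q) : p ≠ 0 ∨ q ≠ 0 := by
  obtain ⟨u, v, -, -, huv⟩ := h
  by_contra! h0
  simp [h0.1, h0.2] at huv

lemma CoprimeIn.gl_smul {p q : ℂ} (h : CoprimeIn d p q) {g : GL (Fin 2) ℂ}
    (hg : ∀ i j, g i j ∈ ringInt d) (hdet : (g.val.det)⁻¹ ∈ ringInt d) :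
    CoprimeIn d (g 0 0 * p + g 0 1 * q) (g 1 0 * p + g 1 1 * q) := by
  obtain ⟨u, v, hu, hv, huv⟩ := h
  have hD : g.val.det = g 0 0 * g 1 1 - g 0 1 * g 1 0 := Matrix.det_fin_two _
  have hD0 : g.val.det ≠ 0 := g.det_ne_zero
  -- the new Bézout coefficients are `(u, v) g⁻¹`
  refine ⟨(g.val.det)⁻¹ * (u * g 1 1 - v * g 1 0), (g.val.det)⁻¹ * (v * g 0 0 - u * g 0 1),
    ringInt_mul hdet (ringInt_sub (ringInt_mul hu (hg 1 1)) (ringInt_mul hv (hg 1 0))),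
    ringInt_mul hdet (ringInt_sub (ringInt_mul hv (hg 0 0)) (ringInt_mul hu (hg 0 1))), ?_⟩
  field_simp
  linear_combination g.val.det * huv - (u * p + v * q) * hD

lemma FareyAdj.symm {x y : OnePoint ℂ} (h : FareyAdj d x y) : FareyAdj d y x := by
  obtain ⟨p₁, q₁, p₂, q₂, hp₁, hq₁, hp₂, hq₂, hc₁, hc₂, hx, hy, hdet⟩ := h
  refine ⟨p₂, q₂, p₁, q₁, hp₂, hq₂, hp₁, hq₁, hc₂, hc₁, hy, hx, ?_⟩
  rw [← norm_neg, neg_sub, hdet]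

lemma fareyAdj_irrefl (x : OnePoint ℂ) : ¬ FareyAdj d x x := by
  rintro ⟨p₁, q₁, p₂, q₂, -, -, -, -, -, -, rfl, h, hdet⟩
  simp [mul_eq_mul_of_divC_eq h] at hdet

lemma fareyAdj_infty_divC_one {a : ℂ} (ha : a ∈ ringInt d) : FareyAdj d ∞ (divC a 1) :=
  ⟨1, 0, a, 1, ringInt_one d, ringInt_zero d, ha, ringInt_one d,
    ⟨1, 0, ringInt_one d, ringInt_zero d, by ring⟩, ⟨0, 1, ringInt_zero d, ringInt_one d, by ring⟩,
    (divC_zero 1).symm, rfl, by simp⟩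

lemma FareyAdj.gl_smul {x y : OnePoint ℂ} (h : FareyAdj d x y) {g : GL (Fin 2) ℂ}
    (hg : ∀ i j, g i j ∈ ringInt d) (hdet : (g.val.det)⁻¹ ∈ ringInt d) :
    FareyAdj d (g • x) (g • y) := by
  obtain ⟨p₁, q₁, p₂, q₂, hp₁, hq₁, hp₂, hq₂, hc₁, hc₂, rfl, rfl, h⟩ := h
  have hD : g.val.det = g 0 0 * g 1 1 - g 0 1 * g 1 0 := Matrix.det_fin_two _
  have hD1 : ‖g.val.det‖ = 1 := by
    refine norm_eq_one_of_inv_mem_ringInt ?_ hdet g.det_ne_zero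
    rw [hD]
    exact ringInt_sub (ringInt_mul (hg 0 0) (hg 1 1)) (ringInt_mul (hg 0 1) (hg 1 0))
  refine ⟨_, _, _, _, ringInt_mul_add_mul (hg 0 0) hp₁ (hg 0 1) hq₁,
    ringInt_mul_add_mul (hg 1 0) hp₁ (hg 1 1) hq₁, ringInt_mul_add_mul (hg 0 0) hp₂ (hg 0 1) hq₂,
    ringInt_mul_add_mul (hg 1 0) hp₂ (hg 1 1) hq₂, hc₁.gl_smul hg hdet, hc₂.gl_smul hg hdet,
    smul_divC g hc₁.ne_zero, smul_divC g hc₂.ne_zero, ?_⟩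
  calc _ = ‖g.val.det * (p₁ * q₂ - p₂ * q₁)‖ := by rw [hD]; ring_nf
    _ = 1 := by rw [norm_mul, hD1, h, one_mul]

variable (d) in
def fareyGraph : SimpleGraph (OnePoint ℂ) where
  Adj := FareyAdj d
  symm := ⟨fun _ _ => FareyAdj.symm⟩
  loopless := ⟨fareyAdj_irrefl⟩

lemma fareyGraph_reachable_gl_smul {x y : OnePoint ℂ} (h : (fareyGraph d).Reachable x y)
    {g : GL (Fin 2) ℂ} (hg : ∀ i j, g i j ∈ ringInt d) (hdet : (g.val.det)⁻¹ ∈ ringInt d) :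
    (fareyGraph d).Reachable (g • x) (g • y) :=
  h.map ⟨(g • ·), fun hxy => FareyAdj.gl_smul hxy hg hdet⟩

noncomputable def euclidStep (a : ℂ) : GL (Fin 2) ℂ :=
  .mkOfDetNeZero !![a, 1; 1, 0] (by simp)

lemma euclidStep_mem_ringInt {a : ℂ} (ha : a ∈ ringInt d) (i j : Fin 2) :
    euclidStep a i j ∈ ringInt d := by
  fin_cases i <;> fin_cases j <;> simp [euclidStep, ha, ringInt_one, ringInt_zero]

variable (d) in
lemma euclidStep_det_inv_mem_ringInt (a : ℂ) : ((euclidStep a).val.det)⁻¹ ∈ ringInt d := by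
  simpa [euclidStep] using ringInt_neg (ringInt_one d)

lemma euclidStep_smul_divC (a : ℂ) {p q : ℂ} (hpq : p ≠ 0 ∨ q ≠ 0) :
    euclidStep a • divC p q = divC (a * p + q) p := by
  simp [smul_divC _ hpq, euclidStep]

variable (d) in
def IsNormEuclidean : Prop := ∀ ξ : ℂ, ∃ a ∈ ringInt d, normSq (ξ - a) < 1

lemma isNormEuclidean_of_omegaD_im (h0 : (omegaD d).im ≠ 0)
    (h3 : (omegaD d).im ^ 2 < 3) : IsNormEuclidean d := fun ξ =>
  let ⟨s, b, h⟩ := exists_int_normSq_sub_lt_one h0 h3 ξ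
  ⟨_, ⟨s, b, rfl⟩, h⟩

lemma IsNormEuclidean.reachable_infty_divC (hd : IsNormEuclidean d) {p q : ℂ}
    (hp : p ∈ ringInt d) (hq : q ∈ ringInt d) : (fareyGraph d).Reachable ∞ (divC p q) := by
  obtain ⟨m, hm⟩ := exists_normSq_eq_natCast hq
  induction m using Nat.strong_induction_on generalizing p q with
  | _ m ih =>
  rcases eq_or_ne q 0 with rfl | hq0
  · rw [divC_zero]
  obtain ⟨a, ha, hlt⟩ := hd (p / q)
  have hr : p - a * q ∈ ringInt d := ringInt_sub hp (ringInt_mul ha hq)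
  obtain ⟨m', hm'⟩ := exists_normSq_eq_natCast hr
  have hm'm : m' < m := by
    have hrq : p - a * q = (p / q - a) * q := by field_simp
    have : normSq (p - a * q) < normSq q := by
      rw [hrq, map_mul]
      exact mul_lt_of_lt_one_left (normSq_pos.2 hq0) hlt
    exact_mod_cast hm' ▸ hm ▸ this
  -- `z ↦ a + 1/z` maps a path from `∞` to `q/r` to a path from `a` to `p/q`
  have hreach := fareyGraph_reachable_gl_smul (ih m' hm'm hq hr hm') (euclidStep_mem_ringInt ha)
    (euclidStep_det_inv_mem_ringInt d a)
  rw [← divC_zero 1, euclidStep_smul_divC a (.inl one_ne_zero),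
    euclidStep_smul_divC a (.inl hq0), mul_one, add_zero, add_sub_cancel] at hreach
  exact (SimpleGraph.Adj.reachable (G := fareyGraph d) (fareyAdj_infty_divC_one ha)).trans hreach

lemma IsNormEuclidean.reachable_infty (hd : IsNormEuclidean d) {x : OnePoint ℂ}
    (hx : isVertex d x) : (fareyGraph d).Reachable ∞ x := by
  rcases hx with rfl | ⟨_, rfl, p, q, hp, hq, hq0, rfl⟩
  · rfl
  · simpa [divC, hq0] using hd.reachable_infty_divC hp hq

lemma isNormEuclidean_of_mem (hd : d ∈ ({1, 2, 3, 7, 11} : Set ℕ)) : IsNormEuclidean d := by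
  have him : 0 < (omegaD d).im ^ 2 ∧ (omegaD d).im ^ 2 < 3 := by
    rw [omegaD_im_sq]
    rcases hd with rfl | rfl | rfl | rfl | rfl <;> norm_num
  exact isNormEuclidean_of_omegaD_im (fun h => by simp [h] at him) him.2

end

/-- For every `d ∈ {1,2,3,7,11}` the Farey graph `E_d` is
connected; in particular, for every `R ∈ ℚ(√(-d))` there is a finite walk in
`E_d` from `∞` to `R`. -/
theorem farey_graph_connected (d : ℕ) (hd : d ∈ ({1, 2, 3, 7, 11} : Set ℕ))
    (x y : OnePoint ℂ) (hx : isVertex d x) (hy : isVertex d y) :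
    ∃ (n : ℕ) (f : ℕ → OnePoint ℂ), f 0 = x ∧ f n = y ∧ IsWalk d n f := by
  have hE := isNormEuclidean_of_mem hd
  obtain ⟨w⟩ := (hE.reachable_infty hx).symm.trans (hE.reachable_infty hy)
  exact ⟨w.length, w.getVert, w.getVert_zero, w.getVert_length, fun k hk => w.adj_getVert_succ hk⟩
end

section
/- Let d ∈ {1,2,3,7,11}, let β > 0 be real, and let a,b,c,e ∈ ℤ[ω_d] with b ≠ 0, e ≠ 0, a,b coprime, c,e coprime, and a/b ≠ c/e. Consider the generalized Ford spheres of size β for a/b and c/e: the Euclidean spheres in ℂ × ℝ with centers (a/b, β/(2|b|²)) and (c/e, β/(2|e|²)) and radii β/(2|b|²) and β/(2|e|²), respectively. These two spheres are tangent to each other (the Euclidean distance between their centers equals the sum of their radii) if and only if |ae − bc| = β, and they are disjoint (the distance between their centers exceeds the sum of their radii) if and only if |ae − bc| > β. -/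
/-
Write `x = ‖a/b - c/e‖` and `r, s` for the two radii. Both spheres touch the plane `t = 0`, so
`dist² - (r + s)² = x² - 4rs`; and `x = ‖ae - bc‖ / (‖b‖‖e‖)` while `4rs = (β / (‖b‖‖e‖))²`.
Hence tangency and disjointness compare `‖ae - bc‖` with `β`.
-/

theorem Real.sqrt_sq_add_sq_sub_eq_add_iff {x r s : ℝ} (hr : 0 ≤ r) (hs : 0 ≤ s) :
    √(x ^ 2 + (r - s) ^ 2) = r + s ↔ x ^ 2 = 4 * r * s := by
  rw [Real.sqrt_eq_iff_eq_sq (by positivity) (by positivity)]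
  constructor <;> intro h <;> linear_combination h

theorem Real.add_lt_sqrt_sq_add_sq_sub_iff {x r s : ℝ} (hr : 0 ≤ r) (hs : 0 ≤ s) :
    r + s < √(x ^ 2 + (r - s) ^ 2) ↔ 4 * r * s < x ^ 2 := by
  rw [Real.lt_sqrt (by positivity)]
  constructor <;> intro h <;> linarith

theorem norm_div_sub_div {K : Type*} [NormedField K] (a c : K) {b e : K} (hb : b ≠ 0)
    (he : e ≠ 0) : ‖a / b - c / e‖ = ‖a * e - b * c‖ / (‖b‖ * ‖e‖) := by
  rw [div_sub_div _ _ hb he, norm_div, norm_mul]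

theorem ford_spheres_tangent_iff_general
    (β : ℝ) (hβ : 0 < β) (a b c e : ℂ)
    (hb0 : b ≠ 0) (he0 : e ≠ 0) :
    (Real.sqrt (‖a / b - c / e‖ ^ 2 +
          (β / (2 * ‖b‖ ^ 2) - β / (2 * ‖e‖ ^ 2)) ^ 2) =
        β / (2 * ‖b‖ ^ 2) + β / (2 * ‖e‖ ^ 2) ↔
      ‖a * e - b * c‖ = β) ∧
    (Real.sqrt (‖a / b - c / e‖ ^ 2 +
          (β / (2 * ‖b‖ ^ 2) - β / (2 * ‖e‖ ^ 2)) ^ 2) >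
        β / (2 * ‖b‖ ^ 2) + β / (2 * ‖e‖ ^ 2) ↔
      ‖a * e - b * c‖ > β) := by
  have hbe : 0 < ‖b‖ * ‖e‖ := by positivity
  have hr : 0 ≤ β / (2 * ‖b‖ ^ 2) := by positivity
  have hs : 0 ≤ β / (2 * ‖e‖ ^ 2) := by positivity
  have hrs : 4 * (β / (2 * ‖b‖ ^ 2)) * (β / (2 * ‖e‖ ^ 2)) = (β / (‖b‖ * ‖e‖)) ^ 2 := by ring
  rw [gt_iff_lt, gt_iff_lt, Real.sqrt_sq_add_sq_sub_eq_add_iff hr hs,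
    Real.add_lt_sqrt_sq_add_sq_sub_iff hr hs, hrs,
    norm_div_sub_div a c hb0 he0,
    sq_eq_sq₀ (by positivity) (by positivity), sq_lt_sq₀ (by positivity) (by positivity),
    div_left_inj' hbe.ne', div_lt_div_iff_of_pos_right hbe]
  exact ⟨Iff.rfl, Iff.rfl⟩

/-- For `d ∈ {1,2,3,7,11}`, `β > 0`, and distinct points
`a/b ≠ c/e` of `ℚ(√(-d))` in coprime lowest terms, the generalized Ford spheres
of size `β` for `a/b` and `c/e` (Euclidean spheres in `ℂ × ℝ` with centers
`(a/b, β/(2|b|²))`, `(c/e, β/(2|e|²))` and radii `β/(2|b|²)`, `β/(2|e|²)`) are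
tangent iff `|ae − bc| = β`, and disjoint iff `|ae − bc| > β`. -/
theorem ford_spheres_tangent_iff (d : ℕ) (hd : d ∈ ({1, 2, 3, 7, 11} : Set ℕ))
    (β : ℝ) (hβ : 0 < β) (a b c e : ℂ)
    (ha : a ∈ ringInt d) (hb : b ∈ ringInt d) (hc : c ∈ ringInt d) (he : e ∈ ringInt d)
    (hb0 : b ≠ 0) (he0 : e ≠ 0)
    (hab : CoprimeIn d a b) (hce : CoprimeIn d c e) (hne : a / b ≠ c / e) :
    (Real.sqrt (‖a / b - c / e‖ ^ 2 +
          (β / (2 * ‖b‖ ^ 2) - β / (2 * ‖e‖ ^ 2)) ^ 2) =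
        β / (2 * ‖b‖ ^ 2) + β / (2 * ‖e‖ ^ 2) ↔
      ‖a * e - b * c‖ = β) ∧
    (Real.sqrt (‖a / b - c / e‖ ^ 2 +
          (β / (2 * ‖b‖ ^ 2) - β / (2 * ‖e‖ ^ 2)) ^ 2) >
        β / (2 * ‖b‖ ^ 2) + β / (2 * ‖e‖ ^ 2) ↔
      ‖a * e - b * c‖ > β) :=
  ford_spheres_tangent_iff_general β hβ a b c e hb0 he0
end

section
/- Let d ∈ {2,7,11}, ℓ = 4 if d ∈ {2,7} and ℓ = 6 if d = 11, and λ = √(ℓ/2) = |ω_d|. Let 0 < y < 1 and n ≥ 1, and assume the first n digits of both algorithms below are defined (i.e., the relevant iterates of F_ℓ at yλ and of S_d at yω_d are nonzero). Then: for every k ≥ 0 with 2k+1 ≤ n, P_{d,2k+1}(yω_d) = p_{ℓ,2k+1}(yλ) and Q_{d,2k+1}(yω_d) = q_{ℓ,2k+1}(yλ)·(conj(ω_d)/λ); and for every k ≥ 1 with 2k ≤ n, P_{d,2k}(yω_d) = p_{ℓ,2k}(yλ)·(ω_d/λ) and Q_{d,2k}(yω_d) = q_{ℓ,2k}(yλ).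 In particular corresponding numerators and denominators have the same absolute value. -/
/-- `⌈x⌉_ℓ = kλ` for the unique integer `k` with `x ∈ ((k−1)λ, kλ]`
(here `λ = √(ℓ/2)`). -/
noncomputable def ceilL (lam x : ℝ) : ℝ := ((⌈x / lam⌉ : ℤ) : ℝ) * lam

/-- The real continued fraction map `F_ℓ(x) = ⌈1/x⌉_ℓ − 1/x`, `F_ℓ(0) = 0`. -/
noncomputable def Fmap (lam : ℝ) (x : ℝ) : ℝ :=
  if x = 0 then 0 else ceilL lam (1 / x) - 1 / x

/-- The digits `b_{ℓ,n}(x) = ⌈1/F_ℓ^{n−1}(x)⌉_ℓ` of the real algorithm. -/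
noncomputable def bdig (lam x : ℝ) (n : ℕ) : ℝ := ceilL lam (1 / ((Fmap lam)^[n - 1] x))

/-- Numerators of the convergents attached to a digit sequence `b` by the
matrix identity of the paper: `p₀ = 0`, `p₁ = 1`, `p_n = b_n p_{n−1} − p_{n−2}`
(`b 0` is unused). -/
noncomputable def recP {K : Type*} [Field K] (b : ℕ → K) : ℕ → K
  | 0 => 0
  | 1 => 1
  | (k + 2) => b (k + 2) * recP b (k + 1) - recP b k

/-- Denominators of the convergents attached to a digit sequence `b`:
`q₀ = 1`, `q₁ = b₁`, `q_n = b_n q_{n−1} − q_{n−2}`. -/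
noncomputable def recQ {K : Type*} [Field K] (b : ℕ → K) : ℕ → K
  | 0 => 1
  | 1 => b 1
  | (k + 2) => b (k + 2) * recQ b (k + 1) - recQ b k

open Classical in
/-- The ceiling `⌈w⌉_d` along the rays `ℝ₊·ω_d` and `ℝ₊·conj(ω_d)`:
for `w = y·ω_d` it is `⌈y⌉·ω_d`, otherwise (for `w = y·conj(ω_d)`) it is
`⌈y⌉·conj(ω_d)`. -/
noncomputable def cdCeil (d : ℕ) (w : ℂ) : ℂ :=
  if ∃ y : ℝ, 0 < y ∧ w = (y : ℂ) * omegaD d then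
    ((⌈(w / omegaD d).re⌉ : ℤ) : ℂ) * omegaD d
  else ((⌈(w / (starRingEnd ℂ) (omegaD d)).re⌉ : ℤ) : ℂ) * (starRingEnd ℂ) (omegaD d)

/-- The complex continued fraction map `S_d(z) = ⌈1/z⌉_d − 1/z`, `S_d(0) = 0`,
on the set `J_d`. -/
noncomputable def SmapJ (d : ℕ) (z : ℂ) : ℂ :=
  if z = 0 then 0 else cdCeil d (1 / z) - 1 / z

/-- The digits `B_{d,n}(z) = ⌈1/S_d^{n−1}(z)⌉_d` of the complex algorithm. -/
noncomputable def BdigJ (d : ℕ) (z : ℂ) (n : ℕ) : ℂ := cdCeil d (1 / ((SmapJ d)^[n - 1] z))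


/-! Write `λ = ‖ω_d‖` and `rayUnit d λ k` for `ω_d/λ` (`k` even) or `conj ω_d/λ` (`k` odd); these
two unit vectors multiply to `1`. Scaling by them carries `⌈·⌉_ℓ` on `[0, ∞)` to `⌈·⌉_d` on the two
rays of `J_d`, and `z ↦ 1/z` sends `t · rayUnit k` to `t⁻¹ · rayUnit (k + 1)`. Hence
`S_d^k(yω_d) = F_ℓ^k(yλ) · rayUnit k` and `B_{d,k} = b_{ℓ,k} · rayUnit k`. Because the units multiply
to `1`, they pass through the three-term recurrence, leaving exactly the factor `ω_d/λ` on even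
numerators and `conj ω_d/λ` on odd denominators. -/

theorem recP_ofReal (b : ℕ → ℝ) (j : ℕ) : recP (fun i => (b i : ℂ)) j = recP b j := by
  induction j using Nat.twoStepInduction with
  | zero => simp [recP]
  | one => simp [recP]
  | more k ih₀ ih₁ => simp [recP, ih₀, ih₁]

theorem recQ_ofReal (b : ℕ → ℝ) (j : ℕ) : recQ (fun i => (b i : ℂ)) j = recQ b j := by
  induction j using Nat.twoStepInduction with
  | zero => simp [recQ]
  | one => simp [recQ]
  | more k ih₀ ih₁ => simp [recQ, ih₀, ih₁]

section Alternating

variable {K : Type*} [Field K] {b c : ℕ → K} {u v : K} {n : ℕ}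

theorem recP_eq_mul_of_alternating (huv : u * v = 1)
    (hc : ∀ k, 1 ≤ k → k ≤ n → c k = b k * if Even k then u else v) :
    ∀ j ≤ n, recP c j = recP b j * if Even j then u else 1 := by
  intro j
  induction j using Nat.twoStepInduction with
  | zero => simp [recP]
  | one => simp [recP]
  | more k ih₀ ih₁ =>
    intro hk
    rw [recP, recP, hc (k + 2) (by omega) hk, ih₀ (by omega), ih₁ (by omega)]
    by_cases he : Even k
    · simp only [Nat.even_add_one, he, not_true_eq_false, not_false_eq_true, ↓reduceIte, mul_one]
      ring
    · simp only [Nat.even_add_one, he, not_true_eq_false, not_false_eq_true, ↓reduceIte, mul_one]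
      linear_combination b (k + 2) * recP b (k + 1) * huv

theorem recQ_eq_mul_of_alternating (huv : u * v = 1)
    (hc : ∀ k, 1 ≤ k → k ≤ n → c k = b k * if Even k then u else v) :
    ∀ j ≤ n, recQ c j = recQ b j * if Even j then 1 else v := by
  intro j
  induction j using Nat.twoStepInduction with
  | zero => simp [recQ]
  | one => intro h; simp [recQ, hc 1 le_rfl h]
  | more k ih₀ ih₁ =>
    intro hk
    rw [recQ, recQ, hc (k + 2) (by omega) hk, ih₀ (by omega), ih₁ (by omega)]
    by_cases he : Even k
    · simp only [Nat.even_add_one, he, not_true_eq_false, not_false_eq_true, ↓reduceIte, mul_one]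
      linear_combination b (k + 2) * recQ b (k + 1) * huv
    · simp only [Nat.even_add_one, he, not_true_eq_false, not_false_eq_true, ↓reduceIte, mul_one]
      ring

end Alternating

theorem omegaD_im_pos {d : ℕ} (hd : 0 < d) : 0 < (omegaD d).im := by
  unfold omegaD
  split_ifs <;> simpa using hd

theorem normSq_omegaD (d : ℕ) :
    Complex.normSq (omegaD d) = if d % 4 = 3 then (1 + (d : ℝ)) / 4 else (d : ℝ) := by
  unfold omegaD
  split_ifs
  · norm_num [Complex.normSq_apply, div_mul_div_comm, add_div]
  · simp [Complex.normSq_apply]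

theorem norm_omegaD_of_mem {d : ℕ} (hd : d ∈ ({2, 7, 11} : Set ℕ)) :
    ‖omegaD d‖ = √((((if d = 11 then 6 else 4 : ℕ)) : ℝ) / 2) := by
  rw [Complex.norm_def, normSq_omegaD]
  rcases hd with rfl | rfl | rfl <;> norm_num

theorem norm_omegaD_pos {d : ℕ} (him : 0 < (omegaD d).im) : 0 < ‖omegaD d‖ :=
  (abs_pos.2 him.ne').trans_le (Complex.abs_im_le_norm _)

theorem cdCeil_ofReal_mul_omegaD {d : ℕ} (hω : omegaD d ≠ 0) {t : ℝ} (ht : 0 < t) :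
    cdCeil d (t * omegaD d) = (⌈t⌉ : ℂ) * omegaD d := by
  rw [cdCeil, if_pos ⟨t, ht, rfl⟩, mul_div_cancel_right₀ _ hω, Complex.ofReal_re]

theorem cdCeil_ofReal_mul_conj_omegaD {d : ℕ} (him : 0 < (omegaD d).im) {t : ℝ} (ht : 0 < t) :
    cdCeil d (t * starRingEnd ℂ (omegaD d)) = (⌈t⌉ : ℂ) * starRingEnd ℂ (omegaD d) := by
  have hne : starRingEnd ℂ (omegaD d) ≠ 0 := by
    simpa using (norm_omegaD_pos him).ne'
  rw [cdCeil, if_neg, mul_div_cancel_right₀ _ hne, Complex.ofReal_re]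
  rintro ⟨s, hs, h⟩
  have h' := congrArg Complex.im h
  simp only [Complex.mul_im, Complex.ofReal_re, Complex.conj_im, mul_neg, Complex.ofReal_im,
    Complex.conj_re, zero_mul, add_zero] at h'
  nlinarith [mul_pos hs him, mul_pos ht him]

theorem Fmap_nonneg {lam : ℝ} (hlam : 0 < lam) (t : ℝ) : 0 ≤ Fmap lam t := by
  unfold Fmap ceilL
  split_ifs
  · rfl
  · exact sub_nonneg.2 ((div_le_iff₀ hlam).1 (Int.le_ceil _))

theorem iterate_Fmap_nonneg {lam x : ℝ} (hlam : 0 < lam) (hx : 0 ≤ x) :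
    ∀ k, 0 ≤ (Fmap lam)^[k] x
  | 0 => hx
  | k + 1 => by rw [Function.iterate_succ_apply']; exact Fmap_nonneg hlam _

noncomputable def rayUnit (d : ℕ) (lam : ℝ) (k : ℕ) : ℂ :=
  if Even k then omegaD d / lam else starRingEnd ℂ (omegaD d) / lam

section Rays

variable {d : ℕ} {lam : ℝ} (hω : ‖omegaD d‖ = lam) (him : 0 < (omegaD d).im)
include hω him

theorem rayUnit_mul_rayUnit_succ (k : ℕ) : rayUnit d lam k * rayUnit d lam (k + 1) = 1 := by
  have hlam : (lam : ℂ) ≠ 0 := by exact_mod_cast (hω ▸ norm_omegaD_pos him).ne'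
  have h := Complex.mul_conj' (omegaD d)
  rw [hω] at h
  by_cases he : Even k
  · simp only [rayUnit, he, ↓reduceIte, Nat.even_add_one, not_true_eq_false]
    field_simp
    exact h
  · simp only [rayUnit, he, ↓reduceIte, Nat.even_add_one, not_false_eq_true]
    field_simp
    rw [mul_comm]; exact h

theorem one_div_ofReal_mul_rayUnit (x : ℝ) (k : ℕ) :
    1 / ((x : ℂ) * rayUnit d lam k) = ((1 / x : ℝ) : ℂ) * rayUnit d lam (k + 1) := by
  rw [one_div, mul_inv, inv_eq_of_mul_eq_one_right (rayUnit_mul_rayUnit_succ hω him k)]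
  push_cast
  ring

theorem cdCeil_ofReal_mul_rayUnit {x : ℝ} (hx : 0 < x) (k : ℕ) :
    cdCeil d (x * rayUnit d lam k) = ceilL lam x * rayUnit d lam k := by
  have hlam : 0 < lam := hω ▸ norm_omegaD_pos him
  have hray (w : ℂ) : (x : ℂ) * (w / lam) = ((x / lam : ℝ) : ℂ) * w := by
    push_cast
    ring
  have hceil (w : ℂ) : ((⌈x / lam⌉ : ℤ) : ℂ) * w = ceilL lam x * (w / lam) := by
    have : (lam : ℂ) ≠ 0 := by exact_mod_cast hlam.ne'
    rw [ceilL]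
    push_cast
    field_simp
  unfold rayUnit
  split_ifs
  · rw [hray, cdCeil_ofReal_mul_omegaD (norm_pos_iff.1 (hω ▸ hlam)) (div_pos hx hlam), hceil]
  · rw [hray, cdCeil_ofReal_mul_conj_omegaD him (div_pos hx hlam), hceil]

theorem SmapJ_ofReal_mul_rayUnit {x : ℝ} (hx : 0 ≤ x) (k : ℕ) :
    SmapJ d (x * rayUnit d lam k) = Fmap lam x * rayUnit d lam (k + 1) := by
  rcases hx.eq_or_lt with rfl | hx
  · simp [SmapJ, Fmap]
  have hne : (x : ℂ) * rayUnit d lam k ≠ 0 :=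
    mul_ne_zero (by exact_mod_cast hx.ne')
      (left_ne_zero_of_mul_eq_one (rayUnit_mul_rayUnit_succ hω him k))
  rw [SmapJ, if_neg hne, one_div_ofReal_mul_rayUnit hω him,
    cdCeil_ofReal_mul_rayUnit hω him (one_div_pos.2 hx), Fmap, if_neg hx.ne']
  push_cast
  ring

theorem iterate_SmapJ {x : ℝ} (hx : 0 ≤ x) (k : ℕ) :
    (SmapJ d)^[k] (x * rayUnit d lam 0) = (Fmap lam)^[k] x * rayUnit d lam k := by
  induction k with
  | zero => rfl
  | succ k ih =>
    rw [Function.iterate_succ_apply', ih, SmapJ_ofReal_mul_rayUnit hω him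
      (iterate_Fmap_nonneg (hω ▸ norm_omegaD_pos him) hx k), Function.iterate_succ_apply']

theorem BdigJ_eq_bdig_mul_rayUnit {x : ℝ} (hx : 0 ≤ x) {n : ℕ}
    (hF : ∀ k < n, (Fmap lam)^[k] x ≠ 0) :
    ∀ k, 1 ≤ k → k ≤ n → BdigJ d (x * rayUnit d lam 0) k = bdig lam x k * rayUnit d lam k := by
  intro k hk1 hkn
  obtain ⟨k, rfl⟩ := Nat.exists_eq_add_of_le' hk1
  have hpos : 0 < (Fmap lam)^[k] x :=
    (iterate_Fmap_nonneg (hω ▸ norm_omegaD_pos him) hx k).lt_of_ne' (hF k (by omega))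
  rw [BdigJ, bdig, Nat.add_sub_cancel, iterate_SmapJ hω him hx, one_div_ofReal_mul_rayUnit hω him,
    cdCeil_ofReal_mul_rayUnit hω him (one_div_pos.2 hpos)]

theorem norm_rayUnit (k : ℕ) : ‖rayUnit d lam k‖ = 1 := by
  have hlam : 0 < lam := hω ▸ norm_omegaD_pos him
  unfold rayUnit
  split_ifs <;> simp [hω, abs_of_pos hlam, hlam.ne']

end Rays

theorem complex_real_convergent_correspondence_general (d l : ℕ) (hd : d ∈ ({2, 7, 11} : Set ℕ))
    (hl : l = if d = 11 then 6 else 4) (lam : ℝ) (hlam : lam = Real.sqrt ((l : ℝ) / 2))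
    (y : ℝ) (hy0 : 0 < y) (n : ℕ)
    (hFdef : ∀ k < n, (Fmap lam)^[k] (y * lam) ≠ 0) :
    (∀ k : ℕ, 2 * k + 1 ≤ n →
      recP (BdigJ d ((y : ℂ) * omegaD d)) (2 * k + 1) =
        ((recP (bdig lam (y * lam)) (2 * k + 1) : ℝ) : ℂ) ∧
      recQ (BdigJ d ((y : ℂ) * omegaD d)) (2 * k + 1) =
        ((recQ (bdig lam (y * lam)) (2 * k + 1) : ℝ) : ℂ) *
          ((starRingEnd ℂ) (omegaD d) / (lam : ℂ))) ∧
    (∀ k : ℕ, 1 ≤ k → 2 * k ≤ n →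
      recP (BdigJ d ((y : ℂ) * omegaD d)) (2 * k) =
        ((recP (bdig lam (y * lam)) (2 * k) : ℝ) : ℂ) * (omegaD d / (lam : ℂ)) ∧
      recQ (BdigJ d ((y : ℂ) * omegaD d)) (2 * k) =
        ((recQ (bdig lam (y * lam)) (2 * k) : ℝ) : ℂ)) ∧
    (∀ m ≤ n, ‖recP (BdigJ d ((y : ℂ) * omegaD d)) m‖ =
        |recP (bdig lam (y * lam)) m| ∧
      ‖recQ (BdigJ d ((y : ℂ) * omegaD d)) m‖ =
        |recQ (bdig lam (y * lam)) m|) := by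
  have hω : ‖omegaD d‖ = lam := by rw [hlam, hl]; exact norm_omegaD_of_mem hd
  have him : 0 < (omegaD d).im := omegaD_im_pos (by rcases hd with rfl | rfl | rfl <;> norm_num)
  have hlam_pos : 0 < lam := hω ▸ norm_omegaD_pos him
  have hz : (y : ℂ) * omegaD d = ((y * lam : ℝ) : ℂ) * rayUnit d lam 0 := by
    have : (lam : ℂ) ≠ 0 := by exact_mod_cast hlam_pos.ne'
    simp only [Complex.ofReal_mul, rayUnit, Even.zero, ↓reduceIte]
    field_simp
  have hdig := BdigJ_eq_bdig_mul_rayUnit hω him (by positivity) hFdef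
  have huv := rayUnit_mul_rayUnit_succ hω him 0
  have hP := recP_eq_mul_of_alternating huv hdig
  have hQ := recQ_eq_mul_of_alternating huv hdig
  simp only [recP_ofReal, recQ_ofReal] at hP hQ
  rw [hz]
  refine ⟨fun k hk => ?_, fun k _ hk => ?_, fun m hm => ?_⟩
  · simpa [rayUnit, Nat.even_add_one] using And.intro (hP _ hk) (hQ _ hk)
  · simpa [rayUnit] using And.intro (hP _ hk) (hQ _ hk)
  · rw [hP m hm, hQ m hm]
    split_ifs <;> simp [norm_rayUnit hω him]

/-- For `d ∈ {2,7,11}`, `ℓ = 4` resp. `6`, `λ = √(ℓ/2)`,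
`0 < y < 1` and `n ≥ 1` such that the first `n` digits of both algorithms are
defined: `P_{d,2k+1}(yω_d) = p_{ℓ,2k+1}(yλ)`,
`Q_{d,2k+1}(yω_d) = q_{ℓ,2k+1}(yλ)·(conj(ω_d)/λ)` for `2k+1 ≤ n`, and
`P_{d,2k}(yω_d) = p_{ℓ,2k}(yλ)·(ω_d/λ)`, `Q_{d,2k}(yω_d) = q_{ℓ,2k}(yλ)` for
`1 ≤ k`, `2k ≤ n`; in particular corresponding numerators and denominators
have the same absolute value. -/
theorem complex_real_convergent_correspondence (d l : ℕ) (hd : d ∈ ({2, 7, 11} : Set ℕ))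
    (hl : l = if d = 11 then 6 else 4) (lam : ℝ) (hlam : lam = Real.sqrt ((l : ℝ) / 2))
    (y : ℝ) (hy0 : 0 < y) (hy1 : y < 1) (n : ℕ) (hn : 1 ≤ n)
    (hFdef : ∀ k < n, (Fmap lam)^[k] (y * lam) ≠ 0)
    (hSdef : ∀ k < n, (SmapJ d)^[k] ((y : ℂ) * omegaD d) ≠ 0) :
    (∀ k : ℕ, 2 * k + 1 ≤ n →
      recP (BdigJ d ((y : ℂ) * omegaD d)) (2 * k + 1) =
        ((recP (bdig lam (y * lam)) (2 * k + 1) : ℝ) : ℂ) ∧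
      recQ (BdigJ d ((y : ℂ) * omegaD d)) (2 * k + 1) =
        ((recQ (bdig lam (y * lam)) (2 * k + 1) : ℝ) : ℂ) *
          ((starRingEnd ℂ) (omegaD d) / (lam : ℂ))) ∧
    (∀ k : ℕ, 1 ≤ k → 2 * k ≤ n →
      recP (BdigJ d ((y : ℂ) * omegaD d)) (2 * k) =
        ((recP (bdig lam (y * lam)) (2 * k) : ℝ) : ℂ) * (omegaD d / (lam : ℂ)) ∧
      recQ (BdigJ d ((y : ℂ) * omegaD d)) (2 * k) =
        ((recQ (bdig lam (y * lam)) (2 * k) : ℝ) : ℂ)) ∧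
    (∀ m ≤ n, ‖recP (BdigJ d ((y : ℂ) * omegaD d)) m‖ =
        |recP (bdig lam (y * lam)) m| ∧
      ‖recQ (BdigJ d ((y : ℂ) * omegaD d)) m‖ =
        |recQ (bdig lam (y * lam)) m|) :=
  complex_real_convergent_correspondence_general d l hd hl lam hlam y hy0 n hFdef
end
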